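/- Let Ξ be the set of pairs of summable nonnegative sequences (p, q) with Σp_i ≤ 1/4, q_i ≤ 1/2 for all i, q_i + q_j ≤ 3/4 for all i ≠ j, and Σp_i + Σq_i = 1. Then the infimum over Ξ of the Shannon entropy H(p,q) of the combined sequence equals 3/2 bits, attained at p = (1/4, 0, 0, ...), q = (1/2, 1/4, 0, 0, ...). -/

import Mathlib

/-!
`negMulLog` is concave with `negMulLog 0 = 0` and `negMulLog (1/4) = negMulLog (1/2) = log 2 / 2`,
so on `[0, 1/2]` it dominates `2 log 2 · min x (1/4)`. Hence the entropy in nats is at least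
`2 log 2 · (∑ pᵢ + ∑ min qᵢ (1/4))`, and since `∑ pᵢ + ∑ qᵢ = 1` it remains to see that the excess
`∑ (qᵢ - 1/4)⁺` is at most `1/4`: if at most two `qᵢ` exceed `1/4` this follows from `qᵢ ≤ 1/2` and
`qᵢ + qⱼ ≤ 3/4`, and if three or more do, the excess is at most `∑ qᵢ - 3/4 ≤ 1/4`.
-/

open scoped ENNReal

/-- Membership in the constraint set `Ξ`. -/
def memXi (p q : ℕ → ℝ) : Prop :=
  (∀ i, 0 ≤ p i) ∧ (∀ i, 0 ≤ q i) ∧ Summable p ∧ Summable q ∧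
  (∑' i, p i) ≤ 1 / 4 ∧ (∀ i, q i ≤ 1 / 2) ∧
  (∀ i j, i ≠ j → q i + q j ≤ 3 / 4) ∧
  (∑' i, p i) + (∑' i, q i) = 1

open Real Finset

lemma negMulLog_one_div_four : negMulLog (1 / 4) = log 2 / 2 := by
  rw [negMulLog, one_div, log_inv, show (4 : ℝ) = 2 ^ 2 by norm_num, log_pow]
  push_cast; ring

lemma negMulLog_one_div_two : negMulLog (1 / 2) = log 2 / 2 := by
  rw [negMulLog, one_div, log_inv]
  ring

lemma two_mul_log_two_mul_min_le_negMulLog {x : ℝ} (hx₀ : 0 ≤ x) (hx : x ≤ 1 / 2) :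
    2 * log 2 * min x (1 / 4) ≤ negMulLog x := by
  rcases le_total x (1 / 4) with h | h
  · have hconc := concaveOn_negMulLog.2 (Set.mem_Ici.2 (by norm_num : (0 : ℝ) ≤ 1 / 4))
      (Set.mem_Ici.2 le_rfl) (by linarith : 0 ≤ 4 * x) (by linarith : 0 ≤ 1 - 4 * x) (by ring)
    simp only [smul_eq_mul, mul_zero, add_zero, negMulLog_zero, negMulLog_one_div_four] at hconc
    rw [show 4 * x * (1 / 4) = x by ring] at hconc
    rw [min_eq_left h]
    linarith
  · have hconc := concaveOn_negMulLog.ge_on_segment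
      (Set.mem_Ici.2 (by norm_num : (0 : ℝ) ≤ 1 / 4))
      (Set.mem_Ici.2 (by norm_num : (0 : ℝ) ≤ 1 / 2))
      (by rw [segment_eq_Icc (by norm_num)]; exact ⟨h, hx⟩)
    rw [negMulLog_one_div_four, negMulLog_one_div_two, min_self] at hconc
    rw [min_eq_right h]
    linarith

section Excess

variable {ι : Type*} {q : ι → ℝ}

lemma Summable.min_const_of_nonneg (hsum : Summable q) (hq₀ : ∀ i, 0 ≤ q i) {c : ℝ}
    (hc : 0 ≤ c) : Summable fun i => min (q i) c :=
  hsum.of_nonneg_of_le (fun i => le_min (hq₀ i) hc) fun _ => min_le_left _ _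

lemma sum_sub_min_one_div_four_le (s : Finset ι) (hq₀ : ∀ i, 0 ≤ q i) (hq : ∀ i, q i ≤ 1 / 2)
    (hpair : ∀ i j, i ≠ j → q i + q j ≤ 3 / 4) (hs : ∑ i ∈ s, q i ≤ 1) :
    ∑ i ∈ s, (q i - min (q i) (1 / 4)) ≤ 1 / 4 := by
  classical
  set F := s.filter (fun i => 1 / 4 < q i)
  have hF : ∑ i ∈ s, (q i - min (q i) (1 / 4)) = ∑ i ∈ F, (q i - 1 / 4) := by
    rw [sum_filter]
    refine sum_congr rfl fun _ _ => ?_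
    split_ifs with h
    · rw [min_eq_right h.le]
    · rw [min_eq_left (not_lt.1 h), sub_self]
  rw [hF]
  rcases le_or_gt F.card 2 with hc | hc
  · interval_cases hcard : F.card
    · simp [card_eq_zero.1 hcard]
    · obtain ⟨a, ha⟩ := card_eq_one.1 hcard
      rw [ha, sum_singleton]
      linarith [hq a]
    · obtain ⟨a, b, hab, hFab⟩ := card_eq_two.1 hcard
      rw [hFab, sum_pair hab]
      linarith [hpair a b hab]
  · have hFs : ∑ i ∈ F, q i ≤ 1 :=
      (sum_le_sum_of_subset_of_nonneg (filter_subset _ _) fun i _ _ => hq₀ i).trans hs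
    have hc' : (3 : ℝ) ≤ F.card := by exact_mod_cast hc
    rw [sum_sub_distrib, sum_const, nsmul_eq_mul]
    linarith

lemma tsum_sub_one_div_four_le_tsum_min (hq₀ : ∀ i, 0 ≤ q i) (hq : ∀ i, q i ≤ 1 / 2)
    (hpair : ∀ i j, i ≠ j → q i + q j ≤ 3 / 4) (hsum : Summable q) (h₁ : ∑' i, q i ≤ 1) :
    ∑' i, q i - 1 / 4 ≤ ∑' i, min (q i) (1 / 4) := by
  have hmin := hsum.min_const_of_nonneg hq₀ (c := 1 / 4) (by norm_num)
  have hexcess : ∑' i, (q i - min (q i) (1 / 4)) ≤ 1 / 4 :=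
    (hsum.sub hmin).tsum_le_of_sum_le fun s => sum_sub_min_one_div_four_le s hq₀ hq hpair
      ((hsum.sum_le_tsum s fun i _ => hq₀ i).trans h₁)
  rw [hsum.tsum_sub hmin] at hexcess
  linarith

end Excess

namespace memXi

variable {p q : ℕ → ℝ}

lemma le_one_div_four (h : memXi p q) (i : ℕ) : p i ≤ 1 / 4 :=
  (h.2.2.1.le_tsum i fun j _ => h.1 j).trans h.2.2.2.2.1

lemma three_div_four_le (h : memXi p q) : 3 / 4 ≤ ∑' i, p i + ∑' i, min (q i) (1 / 4) := by
  obtain ⟨hp₀, hq₀, -, hqs, -, hq, hpair, htot⟩ := h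
  have hp : 0 ≤ ∑' i, p i := tsum_nonneg hp₀
  linarith [tsum_sub_one_div_four_le_tsum_min hq₀ hq hpair hqs (by linarith)]

lemma three_div_two_mul_log_two_le_entropy (h : memXi p q) :
    3 / 2 * ENNReal.ofReal (log 2) ≤
      ∑' i, ENNReal.ofReal (negMulLog (p i)) + ∑' i, ENNReal.ofReal (negMulLog (q i)) := by
  have hp := h.le_one_div_four
  have h34 := h.three_div_four_le
  obtain ⟨hp₀, hq₀, hps, hqs, -, hq, -, -⟩ := h
  have hlog : 0 ≤ 2 * log 2 := by positivity
  have hpterm : ∀ i, 0 ≤ 2 * log 2 * p i := fun i => mul_nonneg hlog (hp₀ i)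
  have hqterm : ∀ i, 0 ≤ 2 * log 2 * min (q i) (1 / 4) :=
    fun i => mul_nonneg hlog (le_min (hq₀ i) (by norm_num))
  have hmin := hqs.min_const_of_nonneg hq₀ (c := 1 / 4) (by norm_num)
  calc 3 / 2 * ENNReal.ofReal (log 2) = ENNReal.ofReal (2 * log 2 * (3 / 4)) := by
        rw [show 2 * log 2 * (3 / 4) = 3 / 2 * log 2 by ring, ENNReal.ofReal_mul (by norm_num),
          ENNReal.ofReal_div_of_pos (by norm_num)]
        norm_num
    _ ≤ ENNReal.ofReal (2 * log 2 * (∑' i, p i + ∑' i, min (q i) (1 / 4))) := by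
        gcongr
    _ = ∑' i, ENNReal.ofReal (2 * log 2 * p i) +
          ∑' i, ENNReal.ofReal (2 * log 2 * min (q i) (1 / 4)) := by
        rw [mul_add, ← tsum_mul_left, ← tsum_mul_left,
          ENNReal.ofReal_add (tsum_nonneg hpterm) (tsum_nonneg hqterm),
          ENNReal.ofReal_tsum_of_nonneg hpterm (hps.mul_left _),
          ENNReal.ofReal_tsum_of_nonneg hqterm (hmin.mul_left _)]
    _ ≤ _ := by
        gcongr with i i
        · have := two_mul_log_two_mul_min_le_negMulLog (hp₀ i) (by linarith [hp i])
          rwa [min_eq_left (hp i)] at this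
        · exact two_mul_log_two_mul_min_le_negMulLog (hq₀ i) (hq i)

end memXi

lemma memXi_extremal : memXi (fun i => if i = 0 then 1 / 4 else 0)
    (fun i => if i = 0 then 1 / 2 else if i = 1 then 1 / 4 else 0) := by
  have hp : HasSum (fun i : ℕ => if i = 0 then (1 / 4 : ℝ) else 0) (1 / 4) := hasSum_ite_eq 0 _
  have hq : HasSum (fun i : ℕ => if i = 0 then (1 / 2 : ℝ) else if i = 1 then 1 / 4 else 0)
      (3 / 4) := by
    convert hasSum_sum_of_ne_finset_zero (L := .unconditional ℕ) (s := {0, 1}) fun i hi => ?_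
      using 1
    · norm_num
    · simp only [mem_insert, mem_singleton, not_or] at hi
      simp [hi.1, hi.2]
  refine ⟨fun i => by dsimp only; split_ifs <;> norm_num,
    fun i => by dsimp only; split_ifs <;> norm_num, hp.summable, hq.summable, hp.tsum_eq.le,
    fun i => by dsimp only; split_ifs <;> norm_num,
    fun i j hij => ?_, by rw [hp.tsum_eq, hq.tsum_eq]; norm_num⟩
  dsimp only
  split_ifs <;> subst_vars <;> first | exact absurd rfl hij | norm_num

lemma entropy_extremal :
    ((∑' i, negMulLog ((fun i : ℕ => if i = 0 then (1 / 4 : ℝ) else 0) i)) +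
      ∑' i, negMulLog
        ((fun i : ℕ => if i = 0 then (1 / 2 : ℝ) else if i = 1 then 1 / 4 else 0) i)) /
      log 2 = 3 / 2 := by
  have hp : ∑' i : ℕ, negMulLog (if i = 0 then 1 / 4 else 0) = log 2 / 2 := by
    simp_rw [apply_ite negMulLog, negMulLog_zero]
    rw [tsum_ite_eq, negMulLog_one_div_four]
  have hq : ∑' i : ℕ, negMulLog (if i = 0 then 1 / 2 else if i = 1 then 1 / 4 else 0) =
      log 2 := by
    rw [tsum_eq_sum (s := {0, 1}) fun i hi => ?_]
    · rw [sum_pair zero_ne_one, if_pos rfl, if_neg one_ne_zero, if_pos rfl,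
        negMulLog_one_div_two, negMulLog_one_div_four]
      ring
    · simp only [mem_insert, mem_singleton, not_or] at hi
      simp [hi.1, hi.2]
  rw [hp, hq]
  field_simp
  norm_num

/-- Over the constraint set `Ξ`, the Shannon entropy in bits of the
combined sequence `(p, q)` is at least `3/2`, and the value `3/2` is attained at
`p = (1/4, 0, 0, …)`, `q = (1/2, 1/4, 0, 0, …)` (which lies in `Ξ`); hence the
infimum equals `3/2` bits.  The lower bound is stated in `ℝ≥0∞` (entropy terms
`-p_i log₂ p_i` are nonnegative) to account for possibly infinite entropy. -/
theorem stmt7 :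
    (∀ p q : ℕ → ℝ, memXi p q →
      (3 / 2 : ℝ≥0∞) ≤
        (∑' i, ENNReal.ofReal (Real.negMulLog (p i)) +
          ∑' i, ENNReal.ofReal (Real.negMulLog (q i))) / ENNReal.ofReal (Real.log 2)) ∧
    memXi (fun i => if i = 0 then 1 / 4 else 0)
      (fun i => if i = 0 then 1 / 2 else if i = 1 then 1 / 4 else 0) ∧
    ((∑' i, Real.negMulLog ((fun i : ℕ => if i = 0 then (1 / 4 : ℝ) else 0) i)) +
      ∑' i, Real.negMulLog
        ((fun i : ℕ => if i = 0 then (1 / 2 : ℝ) else if i = 1 then 1 / 4 else 0) i)) /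
      Real.log 2 = 3 / 2 := by
  refine ⟨fun p q h => ?_, memXi_extremal, entropy_extremal⟩
  have hlog : ENNReal.ofReal (log 2) ≠ 0 := by simpa using log_pos one_lt_two
  exact (ENNReal.le_div_iff_mul_le (.inl hlog) (.inl ENNReal.ofReal_ne_top)).2
    h.three_div_two_mul_log_two_le_entropy
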